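/- arXiv:2111.07071 — 2 statements merged into one kernel-verified Lean document; each statement's English description precedes it below -/
import Mathlib

section
/- Fix positive integers m and n with n ≥ 2. There exists a bijection f from the set of K_n^m-parking functions of length n−1 to the set of break divisors on K_n^m that is equivariant for the action of the symmetric group S_{n−1}: for every K_n^m-parking function a = (a_1,…,a_{n−1}) and every permutation σ of {1,…,n−1}, one has f(a_{σ(1)},…,a_{σ(n−1)}) = f(a) ∘ σ̂, where σ̂ is the permutation of {1,…,n} extending σ by σ̂(n) = n. (Thus the S_{n−1}-set of K_n^m-parking functions is isomorphic to the restriction to S_{n−1} of the S_n-set of break divisors.) -/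
/-- The genus of the complete multigraph `K_n^m`, namely `m·n·(n−1)/2 − n + 1`. -/
def genusZ (m n : ℕ) : ℤ := (m : ℤ) * n * ((n : ℤ) - 1) / 2 - n + 1

/-- A break divisor on the complete multigraph `K_n^m`. -/
def IsBreakDivisor (m n : ℕ) (d : Fin n → ℕ) : Prop :=
  (∑ i, (d i : ℤ)) = genusZ m n ∧
  ∀ S : Finset (Fin n), S.Nonempty →
    (m : ℤ) * S.card * ((S.card : ℤ) - 1) / 2 - S.card + 1 ≤ ∑ i ∈ S, (d i : ℤ)

/-- A `K_n^m`-parking function. -/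
def IsParkingFunction (m n : ℕ) (a : Fin (n - 1) → ℕ) : Prop :=
  ∀ i : Fin (n - 1),
    (i : ℕ) + 1 ≤ (Finset.univ.filter (fun k => a k ≤ m * ((i : ℕ) + 1) - 1)).card

/-- The permutation `σ̂` of `{1,…,n}` extending a permutation `σ` of `{1,…,n−1}`
by fixing the last element. -/
def extendPerm (n : ℕ) (σ : Equiv.Perm (Fin (n - 1))) : Fin n → Fin n :=
  fun i =>
    if h : (i : ℕ) < n - 1 then
      ⟨(σ ⟨(i : ℕ), h⟩ : Fin (n - 1)), lt_of_lt_of_le (σ ⟨(i : ℕ), h⟩).isLt (Nat.sub_le n 1)⟩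
    else i

namespace ParkBreak


open Finset

/-- integer genus in terms of binomial coefficients -/
def Gz (m k : ℕ) : ℤ := (m : ℤ) * (Nat.choose k 2 : ℤ) - k + 1

lemma two_mul_choose_two : ∀ k : ℕ, (2 : ℤ) * (Nat.choose k 2 : ℤ) = (k : ℤ) * ((k : ℤ) - 1) := by
  intro k
  induction k with
  | zero => simp
  | succ j ih =>
    rw [Nat.choose_succ_succ]
    push_cast [Nat.choose_one_right]
    push_cast at ih
    ring_nf
    ring_nf at ih
    linarith

lemma gz_div (m k : ℕ) : (m : ℤ) * k * ((k : ℤ) - 1) / 2 - k + 1 = Gz m k := by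
  have h : (m : ℤ) * k * ((k : ℤ) - 1) = 2 * ((m : ℤ) * (Nat.choose k 2 : ℤ)) := by
    have := two_mul_choose_two k
    ring_nf
    ring_nf at this
    nlinarith [this]
  rw [h, Int.mul_ediv_cancel_left _ two_ne_zero, Gz]

lemma genusZ_eq (m n : ℕ) : genusZ m n = Gz m n := gz_div m n

lemma isBreak_iff (m p : ℕ) (d : Fin (p + 2) → ℕ) :
    IsBreakDivisor m (p + 2) d ↔
      ((∑ v, (d v : ℤ)) = Gz m (p + 2) ∧
        ∀ S : Finset (Fin (p + 2)), S.Nonempty → Gz m S.card ≤ ∑ i ∈ S, (d i : ℤ)) := by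
  unfold IsBreakDivisor
  rw [genusZ_eq]
  constructor
  · rintro ⟨h1, h2⟩
    exact ⟨h1, fun S hS => (gz_div m S.card) ▸ h2 S hS⟩
  · rintro ⟨h1, h2⟩
    exact ⟨h1, fun S hS => (gz_div m S.card) ▸ h2 S hS⟩




variable {m p : ℕ}


/-- chip-firing equivalence of divisors on `K_{p+2}^m` -/
def DivRel (m p : ℕ) (D D' : Fin (p + 2) → ℤ) : Prop :=
  ∃ x : Fin (p + 2) → ℤ, ∀ v, D' v = D v + m * ((p + 2) * x v - ∑ u, x u)

lemma DivRel.refl (D : Fin (p + 2) → ℤ) : DivRel m p D D :=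
  ⟨0, by simp⟩

lemma DivRel.symm {D D' : Fin (p + 2) → ℤ} (h : DivRel m p D D') : DivRel m p D' D := by
  obtain ⟨x, hx⟩ := h
  refine ⟨-x, fun v => ?_⟩
  have := hx v
  simp only [Pi.neg_apply, Finset.sum_neg_distrib]
  linarith

lemma DivRel.trans {D D' D'' : Fin (p + 2) → ℤ} (h : DivRel m p D D') (h' : DivRel m p D' D'') :
    DivRel m p D D'' := by
  obtain ⟨x, hx⟩ := h
  obtain ⟨y, hy⟩ := h'
  refine ⟨x + y, fun v => ?_⟩
  have := hx v; have := hy v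
  simp only [Pi.add_apply, Finset.sum_add_distrib]
  linarith

lemma DivRel.sum_eq {D D' : Fin (p + 2) → ℤ} (h : DivRel m p D D') :
    (∑ v, D' v) = ∑ v, D v := by
  obtain ⟨x, hx⟩ := h
  have : (∑ v, D' v) = ∑ v, (D v + m * ((p + 2) * x v - ∑ u, x u)) :=
    Finset.sum_congr rfl fun v _ => hx v
  rw [this]
  rw [Finset.sum_add_distrib]
  have : (∑ v : Fin (p + 2), (m : ℤ) * ((p + 2) * x v - ∑ u, x u)) = 0 := by
    rw [← Finset.mul_sum, Finset.sum_sub_distrib, ← Finset.mul_sum, Finset.sum_const,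
      Finset.card_univ, Fintype.card_fin]
    push_cast
    ring
  rw [this, add_zero]

lemma DivRel.comp_perm {D D' : Fin (p + 2) → ℤ} (h : DivRel m p D D') (e : Equiv.Perm (Fin (p + 2))) :
    DivRel m p (D ∘ e) (D' ∘ e) := by
  obtain ⟨x, hx⟩ := h
  refine ⟨x ∘ e, fun v => ?_⟩
  have := hx (e v)
  simpa [Equiv.sum_comp e x] using this

/-- extension of a parking-side configuration to a full divisor with last coordinate making
the degree equal to the genus -/
def extz (m p : ℕ) (a : Fin (p + 1) → ℕ) : Fin (p + 2) → ℤ :=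
  Fin.snoc (fun k => (a k : ℤ)) (Gz m (p + 2) - ∑ k, (a k : ℤ))

@[simp] lemma extz_castSucc (a : Fin (p + 1) → ℕ) (k : Fin (p + 1)) :
    extz m p a k.castSucc = (a k : ℤ) := by simp [extz]

@[simp] lemma extz_last (a : Fin (p + 1) → ℕ) :
    extz m p a (Fin.last (p + 1)) = Gz m (p + 2) - ∑ k, (a k : ℤ) := by simp [extz]

lemma sum_extz (a : Fin (p + 1) → ℕ) : (∑ v, extz m p a v) = Gz m (p + 2) := by
  rw [Fin.sum_univ_castSucc]
  simp




lemma gz_step (m s : ℕ) : Gz m (s + 1) = Gz m s + m * s - 1 := by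
  unfold Gz
  rw [Nat.choose_succ_succ]
  push_cast [Nat.choose_one_right]
  ring

lemma gz_identity (m p t : ℕ) (h1 : 1 ≤ t) (h2 : t ≤ p + 1) :
    Gz m t + Gz m (p + 2 - t) + (m : ℤ) * t * ((p : ℤ) + 2 - t) = Gz m (p + 2) + 1 := by
  have hle : t ≤ p + 2 := by omega
  have hcast : ((p + 2 - t : ℕ) : ℤ) = (p : ℤ) + 2 - t := by
    push_cast [Nat.cast_sub hle]; ring
  have h2t := two_mul_choose_two t
  have h2u := two_mul_choose_two (p + 2 - t)
  have h2n := two_mul_choose_two (p + 2)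
  rw [hcast] at h2u
  push_cast at h2n
  have key : (2:ℤ) * (Gz m t + Gz m (p + 2 - t) + (m : ℤ) * t * ((p : ℤ) + 2 - t))
      = 2 * (Gz m (p + 2) + 1) := by
    unfold Gz
    rw [hcast]
    push_cast
    linear_combination (m : ℤ) * h2t + (m : ℤ) * h2u - (m : ℤ) * h2n
  linarith

/-- key scaling identity used for the sum-of-squares decrease -/
lemma gz_scale (m p s : ℕ) :
    2 * (((p : ℤ) + 2) * Gz m s - (s : ℤ) * Gz m (p + 2))
      = 2 * ((p : ℤ) + 2 - s) - (m : ℤ) * (p + 2) * s * ((p : ℤ) + 2 - s) := by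
  have h2t := two_mul_choose_two s
  have h2n := two_mul_choose_two (p + 2)
  push_cast at h2n
  unfold Gz
  push_cast
  linear_combination ((p:ℤ) + 2) * (m : ℤ) * h2t - (s : ℤ) * (m : ℤ) * h2n




/-- restatement of `IsParkingFunction` avoiding `n - 1` -/
def IsPark (m p : ℕ) (a : Fin (p + 1) → ℕ) : Prop :=
  ∀ i : Fin (p + 1),
    (i : ℕ) + 1 ≤ (Finset.univ.filter (fun k => a k ≤ m * ((i : ℕ) + 1) - 1)).card

lemma isPark_iff (m p : ℕ) (a : Fin (p + 1) → ℕ) :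
    IsParkingFunction m (p + 2) a ↔ IsPark m p a := Iff.rfl

/-- reindexing a filter-cardinality along a permutation -/
lemma card_filter_perm {α : Type*} [Fintype α] [DecidableEq α] (σ : Equiv.Perm α)
    (pr : α → Prop) [DecidablePred pr] :
    (univ.filter fun k => pr (σ k)).card = (univ.filter pr).card := by
  apply Finset.card_bij (fun k _ => σ k)
  · intro k hk
    simp only [mem_filter, mem_univ, true_and] at hk ⊢
    exact hk
  · intro k _ k' _ h
    exact σ.injective h
  · intro b hb
    refine ⟨σ.symm b, ?_, by simp⟩
    simp only [mem_filter, mem_univ, true_and] at hb ⊢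
    simpa using hb

lemma park_perm {m p : ℕ} (a : Fin (p + 1) → ℕ) (σ : Equiv.Perm (Fin (p + 1)))
    (ha : IsPark m p a) : IsPark m p (fun k => a (σ k)) := by
  intro i
  have h := ha i
  have h2 := card_filter_perm σ (fun k => a k ≤ m * ((i : ℕ) + 1) - 1)
  simp only at h2 ⊢
  omega

/-- If `a` is a parking function, no `t`-element subset can have all entries `≥ m (p+2-t)`. -/
lemma park_bound_contra {m p : ℕ} (hm : 0 < m) (a : Fin (p + 1) → ℕ)
    (ha : IsPark m p a) (T : Finset (Fin (p + 1))) (hT : T.Nonempty)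
    (hbd : ∀ k ∈ T, m * (p + 2 - T.card) ≤ a k) : False := by
  have htle : T.card ≤ p + 1 := by
    simpa using Finset.card_le_univ T
  have ht1 : 1 ≤ T.card := hT.card_pos
  set t := T.card with htdef
  have hi : p + 1 - t < p + 1 := by omega
  have hpark := ha ⟨p + 1 - t, hi⟩
  simp only [Fin.val_mk] at hpark
  have hval : (p + 1 - t) + 1 = p + 2 - t := by omega
  have hpos : 0 < m * (p + 2 - t) := Nat.mul_pos hm (by omega)
  have hsub : (univ.filter fun k => a k ≤ m * ((p + 1 - t) + 1) - 1) ⊆ univ \ T := by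
    intro k hk
    simp only [mem_filter, mem_univ, true_and] at hk
    simp only [mem_sdiff, mem_univ, true_and]
    intro hkT
    have h1 := hbd k hkT
    rw [hval] at hk
    omega
  have hcard : (univ.filter fun k => a k ≤ m * ((p + 1 - t) + 1) - 1).card ≤ (p + 1) - t :=
    calc (univ.filter fun k => a k ≤ m * ((p + 1 - t) + 1) - 1).card
        ≤ (univ \ T).card := card_le_card hsub
      _ = (p + 1) - t := by
          rw [card_sdiff_of_subset (subset_univ T), card_univ, Fintype.card_fin]
  omega

/-- sum of a parking function is at most the genus -/
lemma sum_park_le {m p : ℕ} (hm : 0 < m) (a : Fin (p + 1) → ℕ) (ha : IsPark m p a) :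
    (∑ k, (a k : ℤ)) ≤ Gz m (p + 2) := by
  set σ := Tuple.sort a with hσ
  have hmono : Monotone (a ∘ σ) := Tuple.monotone_sort a
  have hb : ∀ i : Fin (p + 1), a (σ i) ≤ m * ((i : ℕ) + 1) - 1 := by
    intro i
    by_contra hgt
    push_neg at hgt
    -- all indices ≥ i have large values
    have hsubset : (univ.filter fun k : Fin (p + 1) => a (σ k) ≤ m * ((i : ℕ) + 1) - 1)
        ⊆ univ.filter fun k : Fin (p + 1) => k < i := by
      intro k hk
      simp only [mem_filter, mem_univ, true_and] at hk ⊢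
      by_contra hik
      push_neg at hik
      have : a (σ i) ≤ a (σ k) := hmono hik
      omega
    have hcard2 : (univ.filter fun k : Fin (p + 1) => k < i).card = (i : ℕ) := by
      rw [show (univ.filter fun k : Fin (p + 1) => k < i) = Finset.Iio i from by
        ext k; simp [Finset.mem_Iio]]
      exact Fin.card_Iio i
    have hle := card_le_card hsubset
    rw [hcard2] at hle
    have hre := card_filter_perm σ (fun k => a k ≤ m * ((i : ℕ) + 1) - 1)
    have hpark := ha i
    omega
  -- now sum
  have hsum1 : (∑ k, (a k : ℤ)) = ∑ i : Fin (p + 1), (a (σ i) : ℤ) :=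
    (Equiv.sum_comp σ fun k => (a k : ℤ)).symm
  have hb' : ∀ i : Fin (p + 1), (a (σ i) : ℤ) ≤ (m : ℤ) * ((i : ℕ) + 1) - 1 := by
    intro i
    have h1 := hb i
    have hpos : 1 ≤ m * ((i : ℕ) + 1) := Nat.one_le_iff_ne_zero.2 (by positivity)
    have h2 : (a (σ i) : ℤ) ≤ ((m * ((i : ℕ) + 1) - 1 : ℕ) : ℤ) := by exact_mod_cast h1
    push_cast [Nat.cast_sub hpos] at h2
    linarith
  have hsum2 : (∑ i : Fin (p + 1), ((m : ℤ) * ((i : ℕ) + 1) - 1)) = Gz m (p + 2) := by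
    have hgauss : (∑ i : Fin (p + 1), ((i : ℕ) + 1 : ℤ)) * 2 = ((p : ℤ) + 1) * ((p : ℤ) + 2) := by
      have : ∀ N : ℕ, (∑ i : Fin N, ((i : ℕ) + 1 : ℤ)) * 2 = (N : ℤ) * ((N : ℤ) + 1) := by
        intro N
        induction N with
        | zero => simp
        | succ q ih =>
          rw [Fin.sum_univ_castSucc]
          simp only [Fin.coe_castSucc]
          push_cast
          push_cast at ih
          linarith
      have := this (p + 1)
      push_cast at this
      linarith
    have h2n : (2 : ℤ) * (Nat.choose (p + 2) 2 : ℤ) = ((p : ℤ) + 2) * ((p : ℤ) + 1) := by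
      have : ∀ k : ℕ, (2 : ℤ) * (Nat.choose k 2 : ℤ) = (k : ℤ) * ((k : ℤ) - 1) := by
        intro k
        induction k with
        | zero => simp
        | succ j ih =>
          rw [Nat.choose_succ_succ]
          push_cast [Nat.choose_one_right]
          push_cast at ih
          linarith
      have := this (p + 2)
      push_cast at this
      linarith
    have hS : (∑ i : Fin (p + 1), ((i : ℕ) + 1 : ℤ)) = (Nat.choose (p + 2) 2 : ℤ) := by
      linarith
    rw [Finset.sum_sub_distrib, ← Finset.mul_sum, Finset.sum_const, card_univ, Fintype.card_fin,
      hS]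
    unfold Gz
    push_cast [nsmul_eq_mul]
    ring
  calc (∑ k, (a k : ℤ)) = ∑ i : Fin (p + 1), (a (σ i) : ℤ) := hsum1
    _ ≤ ∑ i : Fin (p + 1), ((m : ℤ) * ((i : ℕ) + 1) - 1) := Finset.sum_le_sum fun i _ => hb' i
    _ = Gz m (p + 2) := hsum2



lemma sum_le_of_max {p : ℕ} (x : Fin (p + 2) → ℤ) (X : ℤ) (hmax : ∀ v, x v ≤ X) :
    (∑ u, x u) ≤ ((univ.filter fun v => x v = X).card : ℤ) * X
      + ((p : ℤ) + 2 - (univ.filter fun v => x v = X).card) * (X - 1) := by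
  classical
  have hsplit := Finset.sum_filter_add_sum_filter_not univ (fun v => x v = X) x
  have h1 : (∑ v ∈ univ.filter (fun v => x v = X), x v)
      = ((univ.filter fun v => x v = X).card : ℤ) * X := by
    rw [Finset.sum_congr rfl (fun v hv => (mem_filter.1 hv).2), Finset.sum_const, nsmul_eq_mul]
  have h2 : (∑ v ∈ univ.filter (fun v => ¬ x v = X), x v)
      ≤ ((univ.filter (fun v => ¬ x v = X)).card : ℤ) * (X - 1) := by
    calc (∑ v ∈ univ.filter (fun v => ¬ x v = X), x v)
        ≤ (univ.filter (fun v => ¬ x v = X)).card • (X - 1) :=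
          Finset.sum_le_card_nsmul _ _ _ (fun v hv => by
            have h3 := (mem_filter.1 hv).2
            have h4 := hmax v
            omega)
      _ = _ := nsmul_eq_mul _ _
  have hcards : (univ.filter fun v => x v = X).card
      + (univ.filter (fun v => ¬ x v = X)).card = p + 2 := by
    rw [Finset.card_filter_add_card_filter_not, card_univ, Fintype.card_fin]
  have hcast : ((univ.filter (fun v => ¬ x v = X)).card : ℤ)
      = (p : ℤ) + 2 - (univ.filter fun v => x v = X).card := by
    omega
  rw [hcast] at h2
  linarith

lemma break_unique {m p : ℕ} (hm : 0 < m) (d d' : Fin (p + 2) → ℕ)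
    (hd : IsBreakDivisor m (p + 2) d) (hd' : IsBreakDivisor m (p + 2) d')
    (h : DivRel m p (fun v => (d v : ℤ)) (fun v => (d' v : ℤ))) : d = d' := by
  classical
  obtain ⟨x, hx⟩ := h
  obtain ⟨v₀, -, hv₀⟩ := Finset.exists_max_image univ x univ_nonempty
  have hmax : ∀ v, x v ≤ x v₀ := fun v => hv₀ v (mem_univ v)
  set X := x v₀ with hX
  set T := univ.filter (fun v => x v = X) with hT
  by_cases hTu : T = univ
  · have hc : ∀ v, x v = X := fun v => by
      have : v ∈ T := hTu ▸ mem_univ v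
      exact (mem_filter.1 this).2
    have hSig : (∑ u, x u) = ((p : ℤ) + 2) * X := by
      rw [Finset.sum_congr rfl fun v _ => hc v, Finset.sum_const, card_univ, Fintype.card_fin,
        nsmul_eq_mul]
      push_cast
      ring
    funext v
    have h1 := hx v
    rw [hc v, hSig] at h1
    have : (d' v : ℤ) = (d v : ℤ) := by linarith
    exact_mod_cast this.symm
  · have hTne : T.Nonempty := ⟨v₀, mem_filter.2 ⟨mem_univ _, rfl⟩⟩
    set t := T.card with htdef
    have ht1 : 1 ≤ t := hTne.card_pos
    have htp : t ≤ p + 1 := by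
      have hlt : t < p + 2 := by
        have := Finset.card_lt_card (Finset.ssubset_univ_iff.2 hTu)
        simpa [Fintype.card_fin] using this
      omega
    have ht2 : (t : ℤ) ≤ (p : ℤ) + 1 := by exact_mod_cast htp
    have hsum_le := sum_le_of_max x X hmax
    rw [← hT, ← htdef] at hsum_le
    have hoff : ∀ v ∈ T, ((p : ℤ) + 2 - t) ≤ ((p : ℤ) + 2) * x v - ∑ u, x u := by
      intro v hv
      have hxv : x v = X := (mem_filter.1 hv).2
      rw [hxv]
      nlinarith [hsum_le]
    have hmz : (1 : ℤ) ≤ (m : ℤ) := by exact_mod_cast hm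
    have hpt : ∀ v ∈ T, (d v : ℤ) + (m : ℤ) * ((p : ℤ) + 2 - t) ≤ (d' v : ℤ) := by
      intro v hv
      have h1 := hx v
      have h2 := hoff v hv
      nlinarith [h2, hmz]
    have hsumT : (∑ v ∈ T, (d v : ℤ)) + (t : ℤ) * ((m : ℤ) * ((p : ℤ) + 2 - t))
        ≤ ∑ v ∈ T, (d' v : ℤ) := by
      have := Finset.sum_le_sum hpt
      rw [Finset.sum_add_distrib, Finset.sum_const, nsmul_eq_mul] at this
      linarith
    have hbk := (isBreak_iff m p d).1 hd
    have hbk' := (isBreak_iff m p d').1 hd'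
    have h1 : Gz m t ≤ ∑ v ∈ T, (d v : ℤ) := hbk.2 T hTne
    have hTcne : Tᶜ.Nonempty := by
      obtain ⟨u, hu⟩ : ∃ u, u ∉ T := by
        by_contra hc
        push_neg at hc
        exact hTu (Finset.eq_univ_iff_forall.2 hc)
      exact ⟨u, Finset.mem_compl.2 hu⟩
    have h2 : Gz m (p + 2 - t) ≤ ∑ v ∈ Tᶜ, (d' v : ℤ) := by
      have := hbk'.2 Tᶜ hTcne
      rwa [Finset.card_compl, Fintype.card_fin] at this
    have h3 : (∑ v ∈ T, (d' v : ℤ)) + ∑ v ∈ Tᶜ, (d' v : ℤ) = Gz m (p + 2) := by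
      rw [Finset.sum_add_sum_compl]
      exact hbk'.1
    have hid := gz_identity m p t ht1 htp
    nlinarith [h1, h2, h3, hsumT, hid]

lemma park_unique {m p : ℕ} (hm : 0 < m) (a a' : Fin (p + 1) → ℕ)
    (ha : IsPark m p a) (ha' : IsPark m p a')
    (h : DivRel m p (extz m p a) (extz m p a')) : a = a' := by
  classical
  obtain ⟨x, hx⟩ := h
  have hmz : (1 : ℤ) ≤ (m : ℤ) := by exact_mod_cast hm
  obtain ⟨v₀, -, hv₀⟩ := Finset.exists_max_image univ x univ_nonempty
  have hmax : ∀ v, x v ≤ x v₀ := fun v => hv₀ v (mem_univ v)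
  set X := x v₀ with hX
  set T := univ.filter (fun v => x v = X) with hT
  by_cases hTu : T = univ
  · have hc : ∀ v, x v = X := fun v => by
      have : v ∈ T := hTu ▸ mem_univ v
      exact (mem_filter.1 this).2
    have hSig : (∑ u, x u) = ((p : ℤ) + 2) * X := by
      rw [Finset.sum_congr rfl fun v _ => hc v, Finset.sum_const, card_univ, Fintype.card_fin,
        nsmul_eq_mul]
      push_cast
      ring
    funext k
    have h1 := hx k.castSucc
    rw [hc k.castSucc, hSig, extz_castSucc, extz_castSucc] at h1
    have : (a' k : ℤ) = (a k : ℤ) := by linarith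
    exact_mod_cast this.symm
  · have hTne : T.Nonempty := ⟨v₀, mem_filter.2 ⟨mem_univ _, rfl⟩⟩
    set t := T.card with htdef
    have ht1 : 1 ≤ t := hTne.card_pos
    have htp : t ≤ p + 1 := by
      have hlt : t < p + 2 := by
        have := Finset.card_lt_card (Finset.ssubset_univ_iff.2 hTu)
        simpa [Fintype.card_fin] using this
      omega
    have ht2 : (t : ℤ) ≤ (p : ℤ) + 1 := by exact_mod_cast htp
    have hsum_le := sum_le_of_max x X hmax
    rw [← hT, ← htdef] at hsum_le
    have hoff : ∀ v ∈ T, ((p : ℤ) + 2 - t) ≤ ((p : ℤ) + 2) * x v - ∑ u, x u := by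
      intro v hv
      have hxv : x v = X := (mem_filter.1 hv).2
      rw [hxv]
      nlinarith [hsum_le]
    by_cases hlast : Fin.last (p + 1) ∈ T
    · -- use the minimum side and contradict `a` being a parking function
      obtain ⟨v₁, -, hv₁⟩ := Finset.exists_min_image univ x univ_nonempty
      have hmin : ∀ v, x v₁ ≤ x v := fun v => hv₁ v (mem_univ v)
      set Y := x v₁ with hY
      set T' := univ.filter (fun v => x v = Y) with hT'
      have hYX : Y < X := by
        obtain ⟨u, hu⟩ : ∃ u, u ∉ T := by
          by_contra hc
          push_neg at hc
          exact hTu (Finset.eq_univ_iff_forall.2 hc)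
        have hxu : ¬ x u = X := fun hc => hu (mem_filter.2 ⟨mem_univ _, hc⟩)
        have h5 := hmax u
        have h6 := hmin u
        omega
      have hlast' : Fin.last (p + 1) ∉ T' := by
        intro hc
        have h7 : x (Fin.last (p + 1)) = Y := (mem_filter.1 hc).2
        have h8 : x (Fin.last (p + 1)) = X := (mem_filter.1 hlast).2
        omega
      have hT'ne : T'.Nonempty := ⟨v₁, mem_filter.2 ⟨mem_univ _, rfl⟩⟩
      set t' := T'.card with ht'def
      have ht'1 : 1 ≤ t' := hT'ne.card_pos
      have ht'p : t' ≤ p + 1 := by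
        have hlt : t' < p + 2 := by
          have hne : T' ≠ univ := fun hc => hlast' (hc ▸ mem_univ _)
          have := Finset.card_lt_card (Finset.ssubset_univ_iff.2 hne)
          simpa [Fintype.card_fin] using this
        omega
      have ht'2 : (t' : ℤ) ≤ (p : ℤ) + 1 := by exact_mod_cast ht'p
      -- lower bound on sum from the min side
      have hsum_ge : (t' : ℤ) * Y + ((p : ℤ) + 2 - t') * (Y + 1) ≤ ∑ u, x u := by
        have hsplit := Finset.sum_filter_add_sum_filter_not univ (fun v => x v = Y) x
        have h1 : (∑ v ∈ univ.filter (fun v => x v = Y), x v) = (t' : ℤ) * Y := by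
          rw [hT'] at ht'def
          rw [Finset.sum_congr rfl (fun v hv => (mem_filter.1 hv).2), Finset.sum_const,
            nsmul_eq_mul, ← ht'def]
        have h2 : ((univ.filter (fun v => ¬ x v = Y)).card : ℤ) * (Y + 1)
            ≤ ∑ v ∈ univ.filter (fun v => ¬ x v = Y), x v := by
          calc ((univ.filter (fun v => ¬ x v = Y)).card : ℤ) * (Y + 1)
              = (univ.filter (fun v => ¬ x v = Y)).card • (Y + 1) :=
                (nsmul_eq_mul _ _).symm
            _ ≤ _ := Finset.card_nsmul_le_sum _ _ _ (fun v hv => by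
                have h3 := (mem_filter.1 hv).2
                have h4 := hmin v
                omega)
        have hcards : (univ.filter fun v => x v = Y).card
            + (univ.filter (fun v => ¬ x v = Y)).card = p + 2 := by
          rw [Finset.card_filter_add_card_filter_not, card_univ, Fintype.card_fin]
        have hcast : ((univ.filter (fun v => ¬ x v = Y)).card : ℤ)
            = (p : ℤ) + 2 - t' := by
          rw [hT'] at ht'def
          omega
        rw [hcast] at h2
        linarith
      have hoff' : ∀ v ∈ T', ((p : ℤ) + 2) * x v - (∑ u, x u) ≤ -(((p : ℤ) + 2 - t')) := by
        intro v hv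
        have hxv : x v = Y := (mem_filter.1 hv).2
        rw [hxv]
        nlinarith [hsum_ge]
      -- transfer to Fin (p+1)
      set Tk := univ.filter (fun k : Fin (p + 1) => k.castSucc ∈ T') with hTk
      have hTkcard : Tk.card = t' := by
        rw [hTk, ht'def]
        apply Finset.card_bij (fun k _ => k.castSucc)
        · intro k hk
          exact (mem_filter.1 hk).2
        · intro k _ k' _ hkk
          exact Fin.castSucc_injective _ hkk
        · intro v hv
          have hvne : v ≠ Fin.last (p + 1) := fun hc => hlast' (hc ▸ hv)
          obtain ⟨k, rfl⟩ := Fin.exists_castSucc_eq.2 hvne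
          exact ⟨k, mem_filter.2 ⟨mem_univ _, hv⟩, rfl⟩
      have hTkne : Tk.Nonempty := by
        obtain ⟨v, hv⟩ := hT'ne
        have hvne : v ≠ Fin.last (p + 1) := fun hc => hlast' (hc ▸ hv)
        obtain ⟨k, rfl⟩ := Fin.exists_castSucc_eq.2 hvne
        exact ⟨k, mem_filter.2 ⟨mem_univ _, hv⟩⟩
      exact absurd (park_bound_contra hm a ha Tk hTkne (fun k hk => by
        have hkT' : k.castSucc ∈ T' := (mem_filter.1 hk).2
        have h1 := hx k.castSucc
        rw [extz_castSucc, extz_castSucc] at h1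
        have h2 := hoff' _ hkT'
        rw [hTkcard]
        have hcast : ((m * (p + 2 - t') : ℕ) : ℤ) = (m : ℤ) * ((p : ℤ) + 2 - t') := by
          have : t' ≤ p + 2 := by omega
          push_cast [Nat.cast_sub this]
          ring
        have h3 : (m : ℤ) * ((p : ℤ) + 2 - t') ≤ (a k : ℤ) := by
          have h4 : (0 : ℤ) ≤ (a' k : ℤ) := by positivity
          nlinarith [h1, h2, hmz]
        rw [← hcast] at h3
        exact_mod_cast h3)) (fun hdum => hdum)
    · -- maximum side avoids the sink, contradict `a'` being a parking function
      set Tk := univ.filter (fun k : Fin (p + 1) => k.castSucc ∈ T) with hTk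
      have hTkcard : Tk.card = t := by
        rw [hTk, htdef]
        apply Finset.card_bij (fun k _ => k.castSucc)
        · intro k hk
          exact (mem_filter.1 hk).2
        · intro k _ k' _ hkk
          exact Fin.castSucc_injective _ hkk
        · intro v hv
          have hvne : v ≠ Fin.last (p + 1) := fun hc => hlast (hc ▸ hv)
          obtain ⟨k, rfl⟩ := Fin.exists_castSucc_eq.2 hvne
          exact ⟨k, mem_filter.2 ⟨mem_univ _, hv⟩, rfl⟩
      have hTkne : Tk.Nonempty := by
        obtain ⟨v, hv⟩ := hTne
        have hvne : v ≠ Fin.last (p + 1) := fun hc => hlast (hc ▸ hv)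
        obtain ⟨k, rfl⟩ := Fin.exists_castSucc_eq.2 hvne
        exact ⟨k, mem_filter.2 ⟨mem_univ _, hv⟩⟩
      exact absurd (park_bound_contra hm a' ha' Tk hTkne (fun k hk => by
        have hkT : k.castSucc ∈ T := (mem_filter.1 hk).2
        have h1 := hx k.castSucc
        rw [extz_castSucc, extz_castSucc] at h1
        have h2 := hoff _ hkT
        rw [hTkcard]
        have hcast : ((m * (p + 2 - t) : ℕ) : ℤ) = (m : ℤ) * ((p : ℤ) + 2 - t) := by
          have : t ≤ p + 2 := by omega
          push_cast [Nat.cast_sub this]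
          ring
        have h3 : (m : ℤ) * ((p : ℤ) + 2 - t) ≤ (a' k : ℤ) := by
          have h4 : (0 : ℤ) ≤ (a k : ℤ) := by positivity
          nlinarith [h1, h2, hmz]
        rw [← hcast] at h3
        exact_mod_cast h3)) (fun hdum => hdum)


lemma sum_sq_shift {p : ℕ} (T : Finset (Fin (p + 2))) (F : Fin (p + 2) → ℤ) (C : ℤ) :
    (∑ v ∈ T, (F v + C)^2)
      = (∑ v ∈ T, (F v)^2) + 2 * C * (∑ v ∈ T, F v) + (T.card : ℤ) * C^2 := by
  have h : ∀ v ∈ T, (F v + C)^2 = (F v)^2 + (2 * C * F v + C^2) := fun v _ => by ring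
  rw [Finset.sum_congr rfl h, Finset.sum_add_distrib, Finset.sum_add_distrib, ← Finset.mul_sum,
    Finset.sum_const, nsmul_eq_mul]
  ring

lemma final_ineq (M ν σ A G g : ℤ) (hM : 1 ≤ M)
    (hA : A ≤ G - 1) (hscale : 2 * (ν * G - σ * g) = 2 * (ν - σ) - M * ν * σ * (ν - σ))
    (hms : 1 ≤ M * σ) (hν : 0 ≤ ν) :
    2 * (M * (ν - σ)) * A + σ * (M * (ν - σ))^2
      + (2 * (-(M * σ)) * (g - A) + (ν - σ) * (-(M * σ))^2) < 0 := by
  have h1 : 2 * M * ν * A ≤ 2 * M * ν * (G - 1) := by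
    apply mul_le_mul_of_nonneg_left hA
    positivity
  have h2 : M * (2 * (ν * G - σ * g)) = M * (2 * (ν - σ) - M * ν * σ * (ν - σ)) := by
    rw [hscale]
  nlinarith [h1, h2, hms]

lemma break_exists {m p : ℕ} (hm : 0 < m) (a : Fin (p + 1) → ℕ) (ha : IsPark m p a) :
    ∃ d : Fin (p + 2) → ℕ, IsBreakDivisor m (p + 2) d ∧
      DivRel m p (extz m p a) (fun v => (d v : ℤ)) := by
  classical
  have hmz : (1 : ℤ) ≤ (m : ℤ) := by exact_mod_cast hm
  have hsa : (∑ k, (a k : ℤ)) ≤ Gz m (p + 2) := sum_park_le hm a ha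
  set d₀ : Fin (p + 2) → ℕ := Fin.snoc a (Gz m (p + 2) - ∑ k, (a k : ℤ)).toNat with hd₀def
  have hd₀ : ∀ v, (d₀ v : ℤ) = extz m p a v := by
    intro v
    induction v using Fin.lastCases with
    | last =>
      rw [hd₀def]
      simp only [Fin.snoc_last, extz_last]
      exact Int.toNat_of_nonneg (by linarith)
    | cast k =>
      rw [hd₀def]
      simp
  have hex : ∃ ψ : ℕ, ∃ dd : Fin (p + 2) → ℕ,
      DivRel m p (extz m p a) (fun v => (dd v : ℤ)) ∧ (∑ v, (dd v)^2) = ψ :=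
    ⟨∑ v, (d₀ v)^2, d₀, ⟨0, fun v => by simp [hd₀ v]⟩, rfl⟩
  obtain ⟨d, hrel, hpsi⟩ := Nat.find_spec hex
  refine ⟨d, ?_, hrel⟩
  have hsum : (∑ v, (d v : ℤ)) = Gz m (p + 2) := by
    have h1 := DivRel.sum_eq hrel
    rwa [sum_extz] at h1
  rw [isBreak_iff]
  refine ⟨hsum, ?_⟩
  by_contra hbad
  push_neg at hbad
  obtain ⟨S₀, hS₀ne, hS₀⟩ := hbad
  set e : Finset (Fin (p + 2)) → ℤ := fun S => (∑ i ∈ S, (d i : ℤ)) - Gz m S.card with hedef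
  set V : Finset (Finset (Fin (p + 2))) := univ.filter (fun S => S.Nonempty ∧ e S < 0) with hVdef
  have hVne : V.Nonempty := by
    refine ⟨S₀, ?_⟩
    rw [hVdef]
    refine mem_filter.2 ⟨mem_univ _, hS₀ne, ?_⟩
    rw [hedef]
    simp only
    linarith
  obtain ⟨S₁, hS₁V, hS₁min⟩ := Finset.exists_min_image V e hVne
  set V' := V.filter (fun S => e S = e S₁) with hV'def
  have hV'ne : V'.Nonempty := ⟨S₁, mem_filter.2 ⟨hS₁V, rfl⟩⟩
  obtain ⟨S, hSV', hSmax⟩ := Finset.exists_max_image V' (fun S => S.card) hV'ne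
  have hSV : S ∈ V := (mem_filter.1 hSV').1
  have hSe : e S = e S₁ := (mem_filter.1 hSV').2
  have hSne : S.Nonempty := by
    have := (mem_filter.1 hSV).2
    rw [hVdef] at hSV
    exact ((mem_filter.1 hSV).2).1
  have hSneg : e S < 0 := by
    rw [hVdef] at hSV
    exact ((mem_filter.1 hSV).2).2
  have heS : e S = (∑ i ∈ S, (d i : ℤ)) - Gz m S.card := by rw [hedef]
  have hs1 : 1 ≤ S.card := hSne.card_pos
  have hsle : S.card ≤ p + 2 := by
    have := Finset.card_le_univ S
    simpa [Fintype.card_fin] using this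
  have hsu : S.card ≤ p + 1 := by
    rcases Nat.lt_or_ge S.card (p + 2) with h | h
    · omega
    · exfalso
      have hSuniv : S = univ := Finset.eq_univ_of_card S (by rw [Fintype.card_fin]; omega)
      have hz : e S = 0 := by
        rw [heS, hSuniv, card_univ, Fintype.card_fin]
        linarith [hsum]
      linarith
  have hs1z : (1 : ℤ) ≤ (S.card : ℤ) := by exact_mod_cast hs1
  have hsuz : ((S.card : ℕ) : ℤ) ≤ (p : ℤ) + 1 := by exact_mod_cast hsu
  -- every vertex outside S has many chips
  have hout : ∀ v, v ∉ S → (m : ℤ) * S.card ≤ (d v : ℤ) := by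
    intro v hv
    by_contra hlt
    push_neg at hlt
    have hvd : (d v : ℤ) ≤ (m : ℤ) * S.card - 1 := by linarith
    have hcardi : (insert v S).card = S.card + 1 := Finset.card_insert_of_notMem hv
    have hsumi : (∑ i ∈ insert v S, (d i : ℤ)) = (d v : ℤ) + ∑ i ∈ S, (d i : ℤ) :=
      Finset.sum_insert hv
    have hstep : Gz m (S.card + 1) = Gz m S.card + m * S.card - 1 := gz_step m S.card
    have heins : e (insert v S) ≤ e S := by
      have h5 : e (insert v S)
          = (d v : ℤ) + (∑ i ∈ S, (d i : ℤ)) - (Gz m S.card + m * S.card - 1) := by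
        rw [hedef]
        simp only
        rw [hcardi, hsumi, hstep]
      rw [h5, heS]
      linarith
    have hins : insert v S ∈ V := by
      rw [hVdef]
      exact mem_filter.2 ⟨mem_univ _, Finset.insert_nonempty _ _, by linarith⟩
    have heq : e (insert v S) = e S₁ := le_antisymm (hSe ▸ heins) (hS₁min _ hins)
    have hmem' : insert v S ∈ V' := mem_filter.2 ⟨hins, heq⟩
    have hc := hSmax _ hmem'
    rw [hcardi] at hc
    omega
  have houtN : ∀ v ∉ S, m * S.card ≤ d v := fun v hv => by exact_mod_cast hout v hv
  set d' : Fin (p + 2) → ℕ :=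
    fun v => if v ∈ S then d v + m * (p + 2 - S.card) else d v - m * S.card with hd'def
  have hd' : ∀ v, (d' v : ℤ)
      = (d v : ℤ) + (m : ℤ) * (((p : ℤ) + 2) * (if v ∈ S then 1 else 0) - S.card) := by
    intro v
    by_cases hv : v ∈ S
    · simp only [hd'def, if_pos hv]
      push_cast [Nat.cast_sub hsle]
      ring
    · simp only [hd'def, if_neg hv]
      push_cast [Nat.cast_sub (houtN v hv)]
      ring
  have hrel' : DivRel m p (extz m p a) (fun v => (d' v : ℤ)) := by
    refine DivRel.trans hrel ⟨fun v => if v ∈ S then 1 else 0, fun v => ?_⟩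
    have hsx : (∑ u : Fin (p + 2), (if u ∈ S then (1 : ℤ) else 0)) = (S.card : ℤ) := by
      rw [Finset.sum_ite_mem, Finset.univ_inter, Finset.sum_const, nsmul_eq_mul, mul_one]
    simp only
    rw [hd' v, hsx]
  have hA : (∑ i ∈ S, (d i : ℤ)) ≤ Gz m S.card - 1 := by
    rw [heS] at hSneg
    linarith
  have hcompl : (∑ i ∈ Sᶜ, (d i : ℤ)) = Gz m (p + 2) - ∑ i ∈ S, (d i : ℤ) := by
    have h1 := Finset.sum_add_sum_compl S (fun i => (d i : ℤ))
    rw [hsum] at h1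
    linarith
  have hcardc : ((Sᶜ.card : ℕ) : ℤ) = (p : ℤ) + 2 - S.card := by
    rw [Finset.card_compl, Fintype.card_fin]
    push_cast [Nat.cast_sub hsle]
    ring
  have hdec : (∑ v, (d' v : ℤ)^2) < ∑ v, (d v : ℤ)^2 := by
    have hsplit : ∀ F : Fin (p + 2) → ℤ, (∑ v, F v) = (∑ v ∈ S, F v) + ∑ v ∈ Sᶜ, F v :=
      fun F => (Finset.sum_add_sum_compl S F).symm
    rw [hsplit (fun v => (d' v : ℤ)^2), hsplit (fun v => (d v : ℤ)^2)]
    have h1 : (∑ v ∈ S, (d' v : ℤ)^2)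
        = ∑ v ∈ S, ((d v : ℤ) + (m : ℤ) * ((p : ℤ) + 2 - S.card))^2 :=
      Finset.sum_congr rfl fun v hv => by rw [hd' v, if_pos hv]; ring_nf
    have h2 : (∑ v ∈ Sᶜ, (d' v : ℤ)^2)
        = ∑ v ∈ Sᶜ, ((d v : ℤ) + (-((m : ℤ) * S.card)))^2 :=
      Finset.sum_congr rfl fun v hv => by
        rw [hd' v, if_neg (Finset.mem_compl.1 hv)]; ring_nf
    rw [h1, h2, sum_sq_shift, sum_sq_shift, hcardc, hcompl]
    have hscale := gz_scale m p S.card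
    have hms : (1 : ℤ) ≤ (m : ℤ) * S.card := by nlinarith [hmz, hs1z]
    have hkey := final_ineq (m : ℤ) ((p : ℤ) + 2) (S.card : ℤ) (∑ i ∈ S, (d i : ℤ))
      (Gz m S.card) (Gz m (p + 2)) hmz hA (by push_cast at hscale ⊢; linarith [hscale]) hms
      (by positivity)
    linarith [hkey]
  have hltn : (∑ v, (d' v)^2) < ∑ v, (d v)^2 := by
    have hcast : ((∑ v, (d' v)^2 : ℕ) : ℤ) < ((∑ v, (d v)^2 : ℕ) : ℤ) := by
      push_cast
      exact hdec
    exact_mod_cast hcast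
  exact Nat.find_min hex (hpsi ▸ hltn) ⟨d', hrel', rfl⟩

lemma park_exists {m p : ℕ} (hm : 0 < m) (d : Fin (p + 2) → ℕ)
    (hd : IsBreakDivisor m (p + 2) d) :
    ∃ a : Fin (p + 1) → ℕ, IsPark m p a ∧
      DivRel m p (extz m p a) (fun v => (d v : ℤ)) := by
  classical
  have hmz : (1 : ℤ) ≤ (m : ℤ) := by exact_mod_cast hm
  have hsum : (∑ v, (d v : ℤ)) = Gz m (p + 2) := ((isBreak_iff m p d).1 hd).1
  -- base point: restriction of d
  have hbase : DivRel m p (extz m p (fun k => d k.castSucc)) (fun v => (d v : ℤ)) := by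
    have hfun : extz m p (fun k => d k.castSucc) = fun v => (d v : ℤ) := by
      funext v
      induction v using Fin.lastCases with
      | last =>
        rw [extz_last]
        rw [Fin.sum_univ_castSucc] at hsum
        linarith
      | cast k => rw [extz_castSucc]
    rw [hfun]
    exact DivRel.refl _
  have hex : ∃ σ : ℕ, ∃ a : Fin (p + 1) → ℕ,
      DivRel m p (extz m p a) (fun v => (d v : ℤ)) ∧ (∑ k, a k) = σ :=
    ⟨∑ k : Fin (p + 1), d k.castSucc, fun k => d k.castSucc, hbase, rfl⟩
  obtain ⟨a, hrel, hsig⟩ := Nat.find_spec hex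
  refine ⟨a, ?_, hrel⟩
  by_contra hnp
  unfold IsPark at hnp
  push_neg at hnp
  obtain ⟨i, hi⟩ := hnp
  -- the overfull set W
  set W : Finset (Fin (p + 1)) :=
    univ.filter (fun k => ¬ a k ≤ m * ((i : ℕ) + 1) - 1) with hWdef
  have hmj : 1 ≤ m * ((i : ℕ) + 1) := Nat.one_le_iff_ne_zero.2 (by positivity)
  have hWcard : p + 1 - (i : ℕ) ≤ W.card := by
    have hWeq : W = univ \ univ.filter (fun k => a k ≤ m * ((i : ℕ) + 1) - 1) := by
      rw [hWdef, Finset.filter_not]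
    rw [hWeq, Finset.card_sdiff_of_subset (Finset.filter_subset _ _), card_univ, Fintype.card_fin]
    omega
  have hik : (i : ℕ) < p + 1 := i.isLt
  have hw1 : 1 ≤ W.card := by omega
  have hwle : W.card ≤ p + 1 := by
    have := Finset.card_le_univ W
    simpa [Fintype.card_fin] using this
  have hWb : ∀ k ∈ W, m * (p + 2 - W.card) ≤ a k := by
    intro k hk
    have hk2 : ¬ a k ≤ m * ((i : ℕ) + 1) - 1 := (mem_filter.1 hk).2
    have hk3 : m * ((i : ℕ) + 1) ≤ a k := by omega
    have hle : p + 2 - W.card ≤ (i : ℕ) + 1 := by omega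
    calc m * (p + 2 - W.card) ≤ m * ((i : ℕ) + 1) := Nat.mul_le_mul_left m hle
      _ ≤ a k := hk3
  set a' : Fin (p + 1) → ℕ :=
    fun k => if k ∈ W then a k - m * (p + 2 - W.card) else a k + m * W.card with ha'def
  have hwle2 : W.card ≤ p + 2 := by omega
  have ha' : ∀ k, (a' k : ℤ)
      = (a k : ℤ) + (m : ℤ) * ((if k ∈ W then -(((p : ℤ) + 2)) else 0) + W.card) := by
    intro k
    by_cases hk : k ∈ W
    · simp only [ha'def, if_pos hk]
      push_cast [Nat.cast_sub (hWb k hk), Nat.cast_sub hwle2]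
      ring
    · simp only [ha'def, if_neg hk]
      push_cast
      ring
  -- sum decreases
  have hsuma' : (∑ k, (a' k : ℤ)) = (∑ k, (a k : ℤ)) - (m : ℤ) * W.card := by
    have h1 : (∑ k, (a' k : ℤ))
        = ∑ k, ((a k : ℤ) + (m : ℤ) * ((if k ∈ W then -(((p : ℤ) + 2)) else 0) + W.card)) :=
      Finset.sum_congr rfl fun k _ => ha' k
    rw [h1, Finset.sum_add_distrib]
    have h2 : (∑ k : Fin (p + 1),
        (m : ℤ) * ((if k ∈ W then -(((p : ℤ) + 2)) else 0) + W.card))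
        = (m : ℤ) * ((∑ k : Fin (p + 1), (if k ∈ W then -(((p : ℤ) + 2)) else 0))
            + (p + 1) * W.card) := by
      rw [← Finset.mul_sum, Finset.sum_add_distrib, Finset.sum_const, card_univ,
        Fintype.card_fin, nsmul_eq_mul]
      push_cast
      ring
    have h3 : (∑ k : Fin (p + 1), (if k ∈ W then -(((p : ℤ) + 2)) else 0))
        = -(((p : ℤ) + 2)) * W.card := by
      rw [Finset.sum_ite_mem, Finset.univ_inter, Finset.sum_const, nsmul_eq_mul]
      ring
    rw [h2, h3]
    push_cast
    ring
  -- the firing vector on the full graph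
  have hstep : DivRel m p (extz m p a') (extz m p a) := by
    refine ⟨Fin.snoc (fun k => if k ∈ W then (1 : ℤ) else 0) 0, fun v => ?_⟩
    have hsx : (∑ u : Fin (p + 2),
        (Fin.snoc (fun k => if k ∈ W then (1 : ℤ) else 0) 0 : Fin (p + 2) → ℤ) u)
        = (W.card : ℤ) := by
      rw [Fin.sum_univ_castSucc]
      simp only [Fin.snoc_castSucc, Fin.snoc_last, add_zero]
      rw [Finset.sum_ite_mem, Finset.univ_inter, Finset.sum_const, nsmul_eq_mul, mul_one]
    rw [hsx]
    induction v using Fin.lastCases with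
    | last =>
      rw [extz_last, extz_last]
      simp only [Fin.snoc_last]
      rw [hsuma']
      push_cast
      ring
    | cast k =>
      rw [extz_castSucc, extz_castSucc]
      simp only [Fin.snoc_castSucc]
      have := ha' k
      by_cases hk : k ∈ W
      · simp only [if_pos hk] at this ⊢
        rw [this]
        push_cast
        ring
      · simp only [if_neg hk] at this ⊢
        rw [this]
        push_cast
        ring
  have hrel' : DivRel m p (extz m p a') (fun v => (d v : ℤ)) := hstep.trans hrel
  have hltn : (∑ k, a' k) < ∑ k, a k := by
    have hcast : ((∑ k, a' k : ℕ) : ℤ) < ((∑ k, a k : ℕ) : ℤ) := by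
      push_cast
      rw [hsuma']
      have : (1 : ℤ) ≤ (m : ℤ) * W.card := by
        have hwz : (1 : ℤ) ≤ (W.card : ℤ) := by exact_mod_cast hw1
        nlinarith [hmz, hwz]
      linarith
    exact_mod_cast hcast
  exact Nat.find_min hex (hsig ▸ hltn) ⟨a', hrel', rfl⟩

lemma extendPerm_castSucc {p : ℕ} (σ : Equiv.Perm (Fin (p + 1))) (k : Fin (p + 1)) :
    extendPerm (p + 2) σ k.castSucc = (σ k).castSucc := by
  have h : ((k.castSucc : Fin (p + 2)) : ℕ) < p + 2 - 1 := by
    simpa using k.isLt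
  rw [extendPerm, dif_pos h]
  apply Fin.ext
  simp

lemma extendPerm_last {p : ℕ} (σ : Equiv.Perm (Fin (p + 1))) :
    extendPerm (p + 2) σ (Fin.last (p + 1)) = Fin.last (p + 1) := by
  have h : ¬ ((Fin.last (p + 1) : Fin (p + 2)) : ℕ) < p + 2 - 1 := by simp
  rw [extendPerm, dif_neg h]

/-- the extension of `σ` as a permutation of `Fin (p+2)` -/
def EP {p : ℕ} (σ : Equiv.Perm (Fin (p + 1))) : Equiv.Perm (Fin (p + 2)) where
  toFun := extendPerm (p + 2) σ
  invFun := extendPerm (p + 2) σ⁻¹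
  left_inv := by
    intro v
    induction v using Fin.lastCases with
    | last => rw [extendPerm_last, extendPerm_last]
    | cast k =>
      rw [extendPerm_castSucc, extendPerm_castSucc]
      simp
  right_inv := by
    intro v
    induction v using Fin.lastCases with
    | last => rw [extendPerm_last, extendPerm_last]
    | cast k =>
      rw [extendPerm_castSucc, extendPerm_castSucc]
      simp

@[simp] lemma EP_apply {p : ℕ} (σ : Equiv.Perm (Fin (p + 1))) (v : Fin (p + 2)) :
    EP σ v = extendPerm (p + 2) σ v := rfl

lemma break_perm {m p : ℕ} (e : Equiv.Perm (Fin (p + 2))) (d : Fin (p + 2) → ℕ)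
    (hd : IsBreakDivisor m (p + 2) d) : IsBreakDivisor m (p + 2) (fun v => d (e v)) := by
  rw [isBreak_iff] at hd ⊢
  constructor
  · rw [Equiv.sum_comp e (fun v => (d v : ℤ))]
    exact hd.1
  · intro S hS
    have hsum : (∑ i ∈ S, (d (e i) : ℤ)) = ∑ j ∈ S.image e, (d j : ℤ) := by
      rw [Finset.sum_image (fun x _ y _ h => e.injective h)]
    have hcard : (S.image e).card = S.card := Finset.card_image_of_injective S e.injective
    have := hd.2 (S.image e) (hS.image e)
    rw [hcard] at this
    rw [hsum]
    exact this

lemma extz_perm {m p : ℕ} (a : Fin (p + 1) → ℕ) (σ : Equiv.Perm (Fin (p + 1))) :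
    extz m p (fun k => a (σ k)) = fun v => extz m p a (EP σ v) := by
  funext v
  induction v using Fin.lastCases with
  | last =>
    rw [EP_apply, extendPerm_last, extz_last, extz_last]
    rw [Equiv.sum_comp σ (fun k => (a k : ℤ))]
  | cast k =>
    rw [EP_apply, extendPerm_castSucc, extz_castSucc, extz_castSucc]

end ParkBreak

/-- There is an `S_{n−1}`-equivariant bijection from `K_n^m`-parking functions to
break divisors on `K_n^m`: `f(a ∘ σ) = f(a) ∘ σ̂` where `σ̂` fixes `n`. -/
theorem parking_equivariant_bijection_break (m n : ℕ) (hm : 0 < m) (hn : 2 ≤ n) :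
    ∃ f : (Fin (n - 1) → ℕ) → (Fin n → ℕ),
      Set.BijOn f {a | IsParkingFunction m n a} {d | IsBreakDivisor m n d} ∧
      ∀ a : Fin (n - 1) → ℕ, IsParkingFunction m n a →
        ∀ σ : Equiv.Perm (Fin (n - 1)),
          f (fun k => a (σ k)) = fun i => f a (extendPerm n σ i) := by
  classical
  obtain ⟨p, rfl⟩ : ∃ p, n = p + 2 := ⟨n - 2, by omega⟩
  open ParkBreak in
  refine ?_
  set F : (Fin (p + 1) → ℕ) → (Fin (p + 2) → ℕ) := fun a =>
    if h : ParkBreak.IsPark m p a then Classical.choose (ParkBreak.break_exists hm a h)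
    else fun _ => 0 with hFdef
  have hFb : ∀ a, ∀ h : ParkBreak.IsPark m p a,
      IsBreakDivisor m (p + 2) (F a) ∧
        ParkBreak.DivRel m p (ParkBreak.extz m p a) (fun v => ((F a) v : ℤ)) := by
    intro a h
    have : F a = Classical.choose (ParkBreak.break_exists hm a h) := by
      rw [hFdef]
      exact dif_pos h
    rw [this]
    exact ⟨(Classical.choose_spec (ParkBreak.break_exists hm a h)).1,
      (Classical.choose_spec (ParkBreak.break_exists hm a h)).2⟩
  refine ⟨F, ⟨?_, ?_, ?_⟩, ?_⟩
  · -- maps to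
    intro a ha
    exact (hFb a ha).1
  · -- injective
    intro a ha a' ha' heq
    have r1 := (hFb a ha).2
    have r2 := (hFb a' ha').2
    have r2' : ParkBreak.DivRel m p (ParkBreak.extz m p a') (fun v => ((F a) v : ℤ)) := by
      rw [heq]
      exact r2
    exact ParkBreak.park_unique hm a a' ha ha' (r1.trans r2'.symm)
  · -- surjective
    intro dd hdd
    obtain ⟨a, hap, hrel⟩ := ParkBreak.park_exists hm dd hdd
    refine ⟨a, hap, ?_⟩
    exact ParkBreak.break_unique hm (F a) dd (hFb a hap).1 hdd
      (((hFb a hap).2).symm.trans hrel)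
  · -- equivariance
    intro a ha σ
    have ha' : ParkBreak.IsPark m p (fun k => a (σ k)) := ParkBreak.park_perm a σ ha
    have hb1 := hFb _ ha'
    have hb2 := hFb a ha
    have hRb : IsBreakDivisor m (p + 2) (fun i => F a (extendPerm (p + 2) σ i)) :=
      ParkBreak.break_perm (ParkBreak.EP σ) (F a) hb2.1
    have hrelR : ParkBreak.DivRel m p (ParkBreak.extz m p (fun k => a (σ k)))
        (fun v => ((F a (extendPerm (p + 2) σ v)) : ℤ)) := by
      have h1 := (hb2.2).comp_perm (ParkBreak.EP σ)
      simp only [Function.comp_def] at h1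
      rw [← ParkBreak.extz_perm (m := m) a σ] at h1
      exact h1
    exact ParkBreak.break_unique hm (F (fun k => a (σ k)))
      (fun i => F a (extendPerm (p + 2) σ i)) hb1.1 hRb ((hb1.2).symm.trans hrelR)
end

section
/- For all positive integers m and n, the integer ∑_{d | n} (−1)^(m(n+d)) · μ(n/d) · C((m+1)d − 1, md) is nonnegative and divisible by n², where the sum is over positive divisors d of n, μ is the Möbius function, and C(·,·) is a binomial coefficient. (This is the integrality and nonnegativity of the numerical Donaldson–Thomas invariant of the (m+1)-loop quiver.) -/
/-!
For `m ≥ 1` the numbers `c d = C((m+1)d - 1, md)` at least double from `d` to `d + 1`, so `c n`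
is at least the sum of all `c d` with `d < n`; this bounds every other term of the Möbius sum and gives
nonnegativity.

For integrality, write the sum as `±∑_{d ∣ n} μ(n/d) f(d)` with `f d = (-1)^(md) c d`. Pairing the
divisors `e` and `p e` (`p ∤ e`) of the Möbius sum shows that `p ^ (2 v_p(n))` divides it as soon as
`f(Np) ≡ f(N) mod p ^ (2 (v_p(N) + 1))`. That congruence comes from
`C(Ap - 1, Bp) = C(A - 1, B) · ∏_{i ≤ Bp, p ∤ i} (Ap - i) / i`. Modulo `p ^ (2k)`, where `p ^ k`
divides `Ap` and `Bp`, we have `(Ap - i)(Ap - (Bp - i)) ≡ (-i)(-(Bp - i))`, so pairing `i` with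
`Bp - i` shows that the product is `(-1)^((p-1)B)`.
-/

open Finset ArithmeticFunction
open scoped Nat ArithmeticFunction.Moebius

theorem Finset.prod_eq_prod_of_involution {ι M : Type*} [CommMonoid M] [DecidableEq ι]
    (σ : ι → ι) (f g : ι → M) (s : Finset ι) (hσ : ∀ i ∈ s, σ i ∈ s)
    (hσσ : ∀ i ∈ s, σ (σ i) = i) (hpair : ∀ i ∈ s, f i * f (σ i) = g i * g (σ i))
    (hfix : ∀ i ∈ s, σ i = i → f i = g i) :
    ∏ i ∈ s, f i = ∏ i ∈ s, g i := by
  induction s using Finset.strongInduction with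
  | H s ih =>
  obtain rfl | ⟨a, ha⟩ := s.eq_empty_or_nonempty
  · simp
  by_cases hfa : σ a = a
  · have hsub : ∀ i ∈ s.erase a, σ i ∈ s.erase a := fun i hi =>
      mem_erase.2 ⟨fun h => (mem_erase.1 hi).1 (by rw [← hσσ i (mem_of_mem_erase hi), h, hfa]),
        hσ i (mem_of_mem_erase hi)⟩
    rw [← mul_prod_erase s f ha, ← mul_prod_erase s g ha, hfix a ha hfa,
      ih _ (erase_ssubset ha) hsub (fun i hi => hσσ i (mem_of_mem_erase hi))
        (fun i hi => hpair i (mem_of_mem_erase hi)) (fun i hi => hfix i (mem_of_mem_erase hi))]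
  · set t := (s.erase a).erase (σ a)
    have hσa : σ a ∈ s.erase a := mem_erase.2 ⟨hfa, hσ a ha⟩
    have hts : t ⊂ s := (erase_ssubset hσa).trans (erase_ssubset ha)
    have hmem : ∀ i ∈ t, i ∈ s := fun i hi => hts.subset hi
    have hsub : ∀ i ∈ t, σ i ∈ t := by
      intro i hi
      simp only [t, mem_erase] at hi ⊢
      refine ⟨fun h => hi.2.1 ?_, fun h => hi.1 ?_, hσ i hi.2.2⟩
      · rw [← hσσ a ha, ← h, hσσ i hi.2.2]
      · rw [← hσσ i hi.2.2, h]
    have hsplit (h : ι → M) : ∏ i ∈ s, h i = h a * h (σ a) * ∏ i ∈ t, h i := by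
      rw [← mul_prod_erase s h ha, ← mul_prod_erase _ h hσa, mul_assoc]
    rw [hsplit, hsplit, hpair a ha, ih t hts hsub (fun i hi => hσσ i (hmem i hi))
      (fun i hi => hpair i (hmem i hi)) (fun i hi => hfix i (hmem i hi))]

theorem sum_Ico_le_of_two_mul_le {f : ℕ → ℕ} (hf : ∀ d, 0 < d → 2 * f d ≤ f (d + 1)) (n : ℕ) :
    ∑ d ∈ Ico 1 n, f d ≤ f n := by
  induction n with
  | zero => simp
  | succ n ih =>
    rcases Nat.eq_zero_or_pos n with rfl | hn
    · simp
    rw [sum_Ico_succ_top hn]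
    linarith [hf n hn]

theorem sum_divisors_nonneg_of_abs_le {f : ℕ → ℕ} (hf : ∀ d, 0 < d → 2 * f d ≤ f (d + 1))
    {n : ℕ} (g : ℕ → ℤ) (hgn : g n = f n) (hg : ∀ d ∈ n.properDivisors, |g d| ≤ f d) :
    0 ≤ ∑ d ∈ n.divisors, g d := by
  have hsub : n.properDivisors ⊆ Ico 1 n := fun d hd =>
    mem_Ico.2 ⟨Nat.pos_of_mem_properDivisors hd, (Nat.mem_properDivisors.1 hd).2⟩
  have hproper : ∑ d ∈ n.properDivisors, (f d : ℤ) ≤ f n := by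
    exact_mod_cast (sum_le_sum_of_subset hsub).trans (sum_Ico_le_of_two_mul_le hf n)
  rcases eq_or_ne n 0 with rfl | hn
  · simp
  rw [← Nat.cons_self_properDivisors hn, sum_cons, hgn]
  linarith [neg_abs_le (∑ d ∈ n.properDivisors, g d), abs_sum_le_sum_abs g n.properDivisors,
    sum_le_sum hg]

theorem sum_divisors_moebius_mul_eq {p n : ℕ} (hp : p.Prime) (hpn : p ∣ n) (g : ℕ → ℤ) :
    ∑ e ∈ n.divisors, μ e * g e = ∑ e ∈ n.divisors with ¬ p ∣ e, μ e * (g e - g (p * e)) := by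
  have hmult : ∑ e ∈ n.divisors with p ∣ e, μ e * g e
      = ∑ e ∈ n.divisors with ¬ p ∣ e, μ (p * e) * g (p * e) := by
    symm
    refine sum_bij_ne_zero (fun e _ _ => p * e) ?_ ?_ ?_ (fun _ _ _ => rfl)
    · intro e he _
      simp only [mem_filter, Nat.mem_divisors] at he ⊢
      exact ⟨⟨Nat.Coprime.mul_dvd_of_dvd_of_dvd ((hp.coprime_iff_not_dvd).2 he.2) hpn he.1.1,
        he.1.2⟩, dvd_mul_right p e⟩
    · intro a _ _ b _ _ h
      exact Nat.eq_of_mul_eq_mul_left hp.pos h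
    · intro b hb hne
      simp only [mem_filter, Nat.mem_divisors] at hb
      obtain ⟨⟨hbn, hn0⟩, c, rfl⟩ := hb
      have hsq : Squarefree (p * c) := moebius_ne_zero_iff_squarefree.1 (left_ne_zero_of_mul hne)
      refine ⟨c, ?_, ?_, rfl⟩
      · simp only [mem_filter, Nat.mem_divisors]
        refine ⟨⟨(dvd_mul_left c p).trans hbn, hn0⟩, fun hpc => hp.one_lt.ne' ?_⟩
        exact Nat.isUnit_iff.1 (hsq p (mul_dvd_mul_left p hpc))
      · rwa [mul_ne_zero_iff] at hne ⊢
  have hsign : ∀ e, ¬ p ∣ e → μ (p * e) = -μ e := fun e he => by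
    rw [isMultiplicative_moebius.map_mul_of_coprime ((hp.coprime_iff_not_dvd).2 he),
      moebius_apply_prime hp, neg_one_mul]
  rw [← sum_filter_add_sum_filter_not _ (p ∣ ·), hmult, ← sum_add_distrib]
  refine sum_congr rfl fun e he => ?_
  rw [hsign e (mem_filter.1 he).2]
  ring

theorem prime_pow_dvd_sum_divisors_moebius_mul {p r : ℕ} (hp : p.Prime) {f : ℕ → ℤ}
    (hf : ∀ N, 0 < N → f (N * p) ≡ f N [ZMOD p ^ (r * (N.factorization p + 1))])
    {n : ℕ} (hn : 0 < n) :
    (p : ℤ) ^ (r * n.factorization p) ∣ ∑ d ∈ n.divisors, μ (n / d) * f d := by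
  by_cases hpn : p ∣ n
  swap
  · simp [Nat.factorization_eq_zero_of_not_dvd hpn]
  rw [← Nat.sum_div_divisors,
    sum_congr rfl fun e he => by rw [Nat.div_div_self (Nat.mem_divisors.1 he).1 hn.ne'],
    sum_divisors_moebius_mul_eq hp hpn]
  refine dvd_sum fun e he => Dvd.dvd.mul_left ?_ _
  simp only [mem_filter, Nat.mem_divisors] at he
  obtain ⟨⟨hen, -⟩, hpe⟩ := he
  obtain ⟨N, hN⟩ : p * e ∣ n :=
    Nat.Coprime.mul_dvd_of_dvd_of_dvd ((hp.coprime_iff_not_dvd).2 hpe) hpn hen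
  have hN0 : N ≠ 0 := by rintro rfl; simp_all
  have he0 : e ≠ 0 := by rintro rfl; simp_all
  have hdiv : n / e = N * p := by
    rw [hN, show p * e * N = N * p * e by ring, Nat.mul_div_cancel _ (Nat.pos_of_ne_zero he0)]
  have hdiv' : n / (p * e) = N := by
    rw [hN, Nat.mul_div_cancel_left _ (Nat.mul_pos hp.pos (Nat.pos_of_ne_zero he0))]
  have hval : n.factorization p = N.factorization p + 1 := by
    rw [hN, Nat.factorization_mul (mul_ne_zero hp.ne_zero he0) hN0,
      Nat.factorization_mul hp.ne_zero he0, Finsupp.add_apply, Finsupp.add_apply,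
      hp.factorization_self, Nat.factorization_eq_zero_of_not_dvd hpe]
    ring
  rw [hdiv, hdiv', hval]
  exact (hf N (Nat.pos_of_ne_zero hN0)).symm.dvd

theorem pow_dvd_sum_divisors_moebius_mul {r : ℕ} {f : ℕ → ℤ}
    (hf : ∀ p N : ℕ, p.Prime → 0 < N → f (N * p) ≡ f N [ZMOD p ^ (r * (N.factorization p + 1))])
    {n : ℕ} (hn : 0 < n) :
    (n : ℤ) ^ r ∣ ∑ d ∈ n.divisors, μ (n / d) * f d := by
  rw [← Nat.cast_pow, Int.natCast_dvd, Nat.dvd_iff_prime_pow_dvd_dvd]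
  intro p k hp hpk
  have hk : k ≤ r * n.factorization p := by
    rwa [hp.pow_dvd_iff_le_factorization (pow_ne_zero r hn.ne'), Nat.factorization_pow,
      Finsupp.smul_apply, smul_eq_mul] at hpk
  rw [← Int.natCast_dvd, Nat.cast_pow]
  exact (pow_dvd_pow _ hk).trans (prime_pow_dvd_sum_divisors_moebius_mul hp (hf p · hp) hn)

theorem prod_Ioc_mul_eq_prod_multiples_mul_prod_not_dvd {M : Type*} [CommMonoid M] {p : ℕ}
    (hp : 0 < p) (B : ℕ) (g : ℕ → M) :
    ∏ i ∈ Ioc 0 (B * p), g i =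
      (∏ j ∈ Ioc 0 B, g (j * p)) * ∏ i ∈ Ioc 0 (B * p) with ¬ p ∣ i, g i := by
  have hmultiples : {i ∈ Ioc 0 (B * p) | p ∣ i} = (Ioc 0 B).image (· * p) := by
    ext i
    simp only [mem_filter, mem_Ioc, mem_image]
    constructor
    · rintro ⟨⟨hi0, hiB⟩, j, rfl⟩
      refine ⟨j, ⟨Nat.pos_of_mul_pos_left hi0, ?_⟩, mul_comm j p⟩
      exact le_of_mul_le_mul_right (by linarith) hp
    · rintro ⟨j, ⟨hj0, hjB⟩, rfl⟩
      exact ⟨⟨Nat.mul_pos hj0 hp, Nat.mul_le_mul_right p hjB⟩, dvd_mul_left p j⟩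
  rw [← prod_filter_mul_prod_filter_not _ (p ∣ ·), hmultiples,
    prod_image fun a _ b _ h => Nat.eq_of_mul_eq_mul_right hp h]

theorem prod_Ioc_sub (a k : ℕ) : ∏ i ∈ Ioc 0 k, (a - i) = (a - 1).descFactorial k := by
  induction k with
  | zero => simp
  | succ k ih =>
    rw [prod_Ioc_succ_top k.zero_le, ih, Nat.descFactorial_succ, mul_comm, Nat.sub_sub, add_comm]

theorem prod_Ioc_id_eq_factorial (k : ℕ) : ∏ i ∈ Ioc 0 k, i = k ! := by
  rw [← Ico_add_one_add_one_eq_Ioc, zero_add, prod_Ico_id_eq_factorial]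

theorem prod_not_dvd_mul_choose_eq {p : ℕ} (hp : 0 < p) (A B : ℕ) :
    (∏ i ∈ Ioc 0 (B * p) with ¬ p ∣ i, i) * (A * p - 1).choose (B * p) =
      (A - 1).choose B * ∏ i ∈ Ioc 0 (B * p) with ¬ p ∣ i, (A * p - i) := by
  have hfact : (B * p)! = p ^ B * B ! * ∏ i ∈ Ioc 0 (B * p) with ¬ p ∣ i, i := by
    rw [← prod_Ioc_id_eq_factorial, prod_Ioc_mul_eq_prod_multiples_mul_prod_not_dvd hp,
      prod_mul_distrib, prod_const, prod_Ioc_id_eq_factorial, Nat.card_Ioc, Nat.sub_zero,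
      mul_comm (B !)]
  have hdesc : (B * p)! * (A * p - 1).choose (B * p) =
      p ^ B * B ! * ((A - 1).choose B * ∏ i ∈ Ioc 0 (B * p) with ¬ p ∣ i, (A * p - i)) := by
    rw [← Nat.descFactorial_eq_factorial_mul_choose, ← prod_Ioc_sub,
      prod_Ioc_mul_eq_prod_multiples_mul_prod_not_dvd hp]
    simp_rw [← Nat.sub_mul]
    rw [prod_mul_distrib, prod_const, Nat.card_Ioc, Nat.sub_zero, prod_Ioc_sub,
      Nat.descFactorial_eq_factorial_mul_choose]
    ring
  rw [hfact, mul_assoc] at hdesc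
  exact Nat.eq_of_mul_eq_mul_left (by positivity) hdesc

theorem prod_sub_eq_neg_one_pow_mul_prod {p A B k : ℕ} (hp : p.Prime) (hBA : B ≤ A)
    (hA : p ^ k ∣ A * p) (hB : p ^ k ∣ B * p) (h2 : p = 2 → Odd B → Even A) :
    ∏ i ∈ Ioc 0 (B * p) with ¬ p ∣ i, ((A * p - i : ℕ) : ZMod (p ^ (2 * k))) =
      (-1) ^ #{i ∈ Ioc 0 (B * p) | ¬ p ∣ i} *
        ∏ i ∈ Ioc 0 (B * p) with ¬ p ∣ i, (i : ZMod (p ^ (2 * k))) := by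
  have hdvd {a b : ℕ} (ha : p ^ k ∣ a) (hb : p ^ k ∣ b) :
      ((a * b : ℕ) : ZMod (p ^ (2 * k))) = 0 := by
    rw [ZMod.natCast_eq_zero_iff, two_mul, pow_add]
    exact mul_dvd_mul ha hb
  have hxx := hdvd hA hA
  have hxy := hdvd hA hB
  push_cast at hxx hxy
  have hmem {i : ℕ} : i ∈ {i ∈ Ioc 0 (B * p) | ¬ p ∣ i} ↔ 0 < i ∧ i ≤ B * p ∧ ¬ p ∣ i := by
    simp [and_assoc]
  have hAp : B * p ≤ A * p := Nat.mul_le_mul_right p hBA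
  rw [← prod_neg]
  refine prod_eq_prod_of_involution (B * p - ·) _ _ _ ?_ ?_ ?_ ?_
  · intro i hi
    rw [hmem] at hi ⊢
    have hlt : i < B * p := lt_of_le_of_ne hi.2.1 fun h => hi.2.2 (h ▸ dvd_mul_left p B)
    refine ⟨by omega, by omega, fun h => hi.2.2 ?_⟩
    simpa [Nat.sub_sub_self hi.2.1] using Nat.dvd_sub (dvd_mul_left p B) h
  · intro i hi
    exact Nat.sub_sub_self (hmem.1 hi).2.1
  · intro i hi
    have hi' := (hmem.1 hi).2.1
    rw [Nat.cast_sub (by omega), Nat.cast_sub (by omega), Nat.cast_sub hi']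
    push_cast
    linear_combination hxx - hxy
  -- A fixed point `2 i = B p` with `p ∤ i` forces `p = 2`, `B` odd and `k ≤ 1`; then `4 ∣ A p`.
  · intro i hi hfix
    obtain ⟨-, hiB, hpi⟩ := hmem.1 hi
    have hp2 : p = 2 := by
      have : p ∣ 2 * i := by rw [show 2 * i = B * p by omega]; exact dvd_mul_left p B
      exact (Nat.prime_dvd_prime_iff_eq hp Nat.prime_two).1
        (((Nat.Prime.dvd_mul hp).1 this).resolve_right hpi)
    subst hp2
    have hBodd : Odd B := by
      rw [Nat.odd_iff]; omega
    have hk : k ≤ 1 := by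
      by_contra hk
      have : 2 ^ 2 ∣ B * 2 := (pow_dvd_pow 2 (by omega)).trans hB
      omega
    have hx : ((A * 2 : ℕ) : ZMod (2 ^ (2 * k))) = 0 := by
      rw [ZMod.natCast_eq_zero_iff]
      obtain ⟨a, ha⟩ := h2 rfl hBodd
      exact (pow_dvd_pow 2 (show 2 * k ≤ 2 by omega)).trans ⟨a, by rw [ha]; ring⟩
    rw [Nat.cast_sub (by omega), hx, zero_sub]

theorem choose_mul_sub_one_modEq {p A B k : ℕ} (hp : p.Prime) (hBA : B ≤ A)
    (hA : p ^ k ∣ A * p) (hB : p ^ k ∣ B * p) (h2 : p = 2 → Odd B → Even A) :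
    ((A * p - 1).choose (B * p) : ℤ) ≡ (-1) ^ ((p - 1) * B) * (A - 1).choose B
      [ZMOD (p ^ (2 * k) : ℕ)] := by
  have hcard : #{i ∈ Ioc 0 (B * p) | ¬ p ∣ i} = (p - 1) * B := by
    have := card_filter_add_card_filter_not (s := Ioc 0 (B * p)) (p := (p ∣ ·))
    rw [Nat.Ioc_filter_dvd_card_eq_div, Nat.card_Ioc, Nat.mul_div_cancel _ hp.pos] at this
    rw [Nat.sub_one_mul, mul_comm p B]
    omega
  have hunit : IsUnit (∏ i ∈ Ioc 0 (B * p) with ¬ p ∣ i, (i : ZMod (p ^ (2 * k)))) := by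
    rw [← Nat.cast_prod, ZMod.isUnit_iff_coprime]
    refine Nat.Coprime.pow_right _ (Nat.Coprime.prod_left fun i hi => ?_)
    exact Nat.coprime_comm.1 ((hp.coprime_iff_not_dvd).2 (mem_filter.1 hi).2)
  have hid := congrArg (Nat.cast : ℕ → ZMod (p ^ (2 * k))) (prod_not_dvd_mul_choose_eq hp.pos A B)
  push_cast at hid
  rw [← ZMod.intCast_eq_intCast_iff]
  push_cast
  apply hunit.mul_left_cancel
  rw [hid, prod_sub_eq_neg_one_pow_mul_prod hp hBA hA hB h2, hcard]
  ring

theorem Nat.choose_le_choose_add_add (n k j : ℕ) : n.choose k ≤ (n + j).choose (k + j) := by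
  induction j with
  | zero => rfl
  | succ j ih =>
    rw [← add_assoc, ← add_assoc, Nat.choose_succ_succ']
    exact ih.trans (Nat.le_add_right _ _)

theorem two_mul_choose_le_choose_succ {m d : ℕ} (hm : 0 < m) (hd : 0 < d) :
    2 * ((m + 1) * d - 1).choose (m * d) ≤ ((m + 1) * (d + 1) - 1).choose (m * (d + 1)) := by
  obtain ⟨j, rfl⟩ : ∃ j, m = j + 1 := ⟨m - 1, by omega⟩
  have hsucc : (j + 1 + 1) * (d + 1) - 1 = ((j + 1 + 1) * d - 1) + j + 1 + 1 := by
    have : 0 < (j + 1 + 1) * d := by positivity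
    rw [mul_add_one]
    omega
  rw [hsucc, mul_add_one, ← add_assoc, Nat.choose_succ_succ', two_mul]
  gcongr
  · exact (Nat.choose_le_choose_add_add _ _ j).trans (Nat.choose_le_choose _ (by omega))
  · exact Nat.choose_le_choose_add_add _ _ (j + 1)

theorem neg_one_pow_mul_choose_modEq (m : ℕ) {p N : ℕ} (hp : p.Prime) :
    (-1 : ℤ) ^ (m * (N * p)) * (((m + 1) * (N * p) - 1).choose (m * (N * p)) : ℤ) ≡
      (-1) ^ (m * N) * (((m + 1) * N - 1).choose (m * N) : ℤ)
      [ZMOD p ^ (2 * (N.factorization p + 1))] := by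
  have hpk : p ^ (N.factorization p + 1) ∣ N * p :=
    (pow_succ p _).symm ▸ mul_dvd_mul (Nat.ordProj_dvd N p) dvd_rfl
  have h2 : p = 2 → Odd (m * N) → Even ((m + 1) * N) := fun _ hodd =>
    (Nat.odd_mul.1 hodd).1.add_one.mul_right N
  have h := choose_mul_sub_one_modEq hp (Nat.mul_le_mul_right N (Nat.le_add_right m 1))
    (hpk.trans ⟨m + 1, by ring⟩) (hpk.trans ⟨m, by ring⟩) h2
  simp only [mul_assoc, Nat.cast_pow] at h
  have hexp : m * (N * p) = m * N + (p - 1) * (m * N) := by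
    obtain ⟨q, rfl⟩ : ∃ q, p = q + 1 := ⟨p - 1, by have := hp.pos; omega⟩
    rw [Nat.add_sub_cancel]
    ring
  calc (-1 : ℤ) ^ (m * (N * p)) * (((m + 1) * (N * p) - 1).choose (m * (N * p)) : ℤ)
      ≡ (-1) ^ (m * (N * p)) * ((-1) ^ ((p - 1) * (m * N)) *
          (((m + 1) * N - 1).choose (m * N) : ℤ)) [ZMOD p ^ (2 * (N.factorization p + 1))] :=
        h.mul_left _
    _ = (-1) ^ (m * N) * (((m + 1) * N - 1).choose (m * N) : ℤ) := by
        rw [hexp, pow_add, ← mul_assoc, mul_assoc ((-1 : ℤ) ^ (m * N)), ← pow_add, ← two_mul,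
          pow_mul (-1 : ℤ) 2, neg_one_sq, one_pow, mul_one]

open ArithmeticFunction in
/-- The integer `∑_{d | n} (−1)^(m(n+d)) · μ(n/d) · C((m+1)d − 1, md)` is nonnegative
and divisible by `n²` (integrality and nonnegativity of the numerical Donaldson–Thomas
invariant of the `(m+1)`-loop quiver). -/
theorem DT_nonneg_and_integral (m n : ℕ) (hm : 0 < m) (hn : 0 < n) :
    0 ≤ ∑ d ∈ n.divisors,
          (-1 : ℤ) ^ (m * (n + d)) * moebius (n / d) *
            (((m + 1) * d - 1).choose (m * d) : ℤ) ∧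
    ((n : ℤ) ^ 2 ∣
      ∑ d ∈ n.divisors,
        (-1 : ℤ) ^ (m * (n + d)) * moebius (n / d) *
          (((m + 1) * d - 1).choose (m * d) : ℤ)) := by
  constructor
  · refine sum_divisors_nonneg_of_abs_le (f := fun d => ((m + 1) * d - 1).choose (m * d))
      (fun d hd => two_mul_choose_le_choose_succ hm hd) _ ?_ fun d _ => ?_
    · rw [Nat.div_self hn, moebius_apply_one, ← two_mul, mul_left_comm, pow_mul, neg_one_sq,
        one_pow, one_mul, one_mul]
    · rw [abs_mul, abs_mul, abs_pow, abs_neg, abs_one, one_pow, one_mul, Nat.abs_cast]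
      exact mul_le_of_le_one_left (Nat.cast_nonneg _) abs_moebius_le_one
  · have hsign : ∀ d, (-1 : ℤ) ^ (m * (n + d)) * μ (n / d) * (((m + 1) * d - 1).choose (m * d))
        = (-1) ^ (m * n) * (μ (n / d) * ((-1) ^ (m * d) * ((m + 1) * d - 1).choose (m * d))) :=
      fun d => by rw [mul_add, pow_add]; ring
    simp only [hsign, ← mul_sum]
    exact (pow_dvd_sum_divisors_moebius_mul
      (fun p N hp _ => neg_one_pow_mul_choose_modEq m hp) hn).mul_left _
end
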